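/- arXiv:1412.4437 — 2 statements merged into one kernel-verified Lean document; each statement's English description precedes it below -/
import Mathlib

section
/- Let n ≥ 2 and set ν = (n−2)/2. Then for every x ∈ ℝ^n with x ≠ 0: ∫_{S^{n−1}} e^{i⟨x,ξ⟩} dσ(ξ) = (2π)^{n/2} · J_{ν}(|x|) / |x|^{ν}. -/
open MeasureTheory Real
open scoped RealInnerProductSpace

open Set Metric
open scoped NNReal ENNReal

noncomputable section

/-- The surface measure on the unit sphere `S^{n-1} ⊆ ℝ^n`. -/
def sphereMeasure (n : ℕ) : Measure (Metric.sphere (0 : EuclideanSpace ℝ (Fin n)) 1) :=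
  (volume : Measure (EuclideanSpace ℝ (Fin n))).toSphere

/-- The Bessel function of the first kind `J_μ`, via its power series. -/
def besselJ (μ : ℝ) (r : ℝ) : ℝ :=
  ∑' k : ℕ, ((-1 : ℝ) ^ k / (k.factorial * Real.Gamma (k + μ + 1))) * (r / 2) ^ (2 * (k : ℝ) + μ)


lemma gamma_half (k : ℕ) :
    Real.Gamma ((k : ℝ) + 1/2) = (Nat.factorial (2*k)) * Real.sqrt π / (4^k * Nat.factorial k) := by
  induction k with
  | zero => simpa using Real.Gamma_one_half_eq
  | succ k ih =>
    have hne : ((k:ℝ) + 1/2) ≠ 0 := by positivity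
    have h : ((k+1 : ℕ) : ℝ) + 1/2 = ((k:ℝ) + 1/2) + 1 := by push_cast; ring
    rw [h, Real.Gamma_add_one hne, ih]
    have h2 : 2*(k+1) = (2*k+1)+1 := by ring
    rw [h2, Nat.factorial_succ, Nat.factorial_succ (2*k), Nat.factorial_succ k]
    have h4 : (0:ℝ) < 4^k := by positivity
    have hk : (0:ℝ) < (Nat.factorial k : ℝ) := by exact_mod_cast Nat.factorial_pos k
    have hk2 : (0:ℝ) < (Nat.factorial (2*k) : ℝ) := by exact_mod_cast Nat.factorial_pos (2*k)
    push_cast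
    field_simp
    ring

lemma gauss_even (k : ℕ) : (∫ t : ℝ, t^(2*k) * Real.exp (-t^2)) = Real.Gamma ((k:ℝ) + 1/2) := by
  have h1 : (fun t : ℝ => t^(2*k) * Real.exp (-t^2))
      = (fun t : ℝ => (fun s : ℝ => s^(2*k) * Real.exp (-s^2)) |t|) := by
    funext t; simp only [pow_mul, sq_abs]
  rw [h1, integral_comp_abs (f := fun s : ℝ => s^(2*k) * Real.exp (-s^2))]
  have h2 : ∀ s ∈ Ioi (0:ℝ), s^(2*k) * Real.exp (-s^2) = s ^ ((2*k : ℕ):ℝ) * Real.exp (-s ^ (2:ℝ)) := by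
    intro s hs
    rw [Real.rpow_natCast, show ((2:ℝ)) = ((2:ℕ):ℝ) by norm_num, Real.rpow_natCast]
  rw [setIntegral_congr_fun measurableSet_Ioi h2,
    integral_rpow_mul_exp_neg_rpow two_pos
      (by exact lt_of_lt_of_le (by norm_num) (Nat.cast_nonneg _))]
  rw [show (((2*k:ℕ):ℝ) + 1)/2 = (k:ℝ) + 1/2 by push_cast; ring]
  ring

lemma gauss_odd (k : ℕ) : (∫ t : ℝ, t^(2*k+1) * Real.exp (-t^2)) = 0 := by
  have h := MeasureTheory.integral_neg_eq_self (fun t : ℝ => t^(2*k+1) * Real.exp (-t^2)) volume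
  have h2 : (fun t : ℝ => (-t)^(2*k+1) * Real.exp (-(-t)^2))
      = fun t : ℝ => -(t^(2*k+1) * Real.exp (-t^2)) := by
    funext t; rw [Odd.neg_pow ⟨k, by ring⟩, neg_sq]; ring
  rw [h2, integral_neg] at h
  linarith

variable {n : ℕ}

lemma polar_eq (hn : 0 < n) (f : EuclideanSpace ℝ (Fin n) → ℝ) :
    ∫ y, f y = ∫ p : sphere (0 : EuclideanSpace ℝ (Fin n)) 1 × Ioi (0:ℝ),
      f (p.2.1 • p.1.1)
      ∂((volume : Measure (EuclideanSpace ℝ (Fin n))).toSphere.prod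
          (Measure.volumeIoiPow (n - 1))) := by
  haveI : Nontrivial (EuclideanSpace ℝ (Fin n)) := by
    refine ⟨EuclideanSpace.single ⟨0, hn⟩ 1, 0, fun h => ?_⟩
    have := congrArg norm h
    rw [EuclideanSpace.norm_single, norm_zero] at this
    simp at this
  have hdim : Module.finrank ℝ (EuclideanSpace ℝ (Fin n)) = n := finrank_euclideanSpace_fin
  have key := (volume : Measure (EuclideanSpace ℝ (Fin n))).measurePreserving_homeomorphUnitSphereProd
  rw [hdim] at key
  have h1 : ∫ y, f y ∂(volume : Measure (EuclideanSpace ℝ (Fin n)))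
      = ∫ x : ({0}ᶜ : Set (EuclideanSpace ℝ (Fin n))), f x ∂(volume.comap Subtype.val) := by
    rw [integral_subtype_comap (measurableSet_singleton 0).compl f,
      MeasureTheory.restrict_compl_singleton]
  rw [h1, ← key.integral_comp (Homeomorph.measurableEmbedding _) (fun p => f (p.2.1 • p.1.1))]
  refine integral_congr_ae (Filter.Eventually.of_forall fun x => ?_)
  simp only [homeomorphUnitSphereProd_apply_fst_coe, homeomorphUnitSphereProd_apply_snd_coe]
  rw [smul_inv_smul₀ (norm_ne_zero_iff.2 x.2)]

lemma integral_volumeIoiPow (k : ℕ) (g : ℝ → ℝ) :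
    (∫ r : Ioi (0:ℝ), g r.1 ∂(Measure.volumeIoiPow k)) = ∫ r in Ioi (0:ℝ), r ^ k * g r := by
  rw [Measure.volumeIoiPow]
  rw [show (fun (r : Ioi (0:ℝ)) => ENNReal.ofReal (r.1^k))
      = (fun (r : Ioi (0:ℝ)) => ((Real.toNNReal (r.1^k) : ℝ≥0) : ENNReal)) from rfl]
  rw [integral_withDensity_eq_integral_smul
    ((measurable_subtype_coe.pow_const _).real_toNNReal) (fun r : Ioi (0:ℝ) => g r.1)]
  rw [integral_subtype_comap measurableSet_Ioi (fun a : ℝ => Real.toNNReal (a^k) • g a)]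
  refine setIntegral_congr_fun measurableSet_Ioi fun x hx => ?_
  rw [NNReal.smul_def, Real.coe_toNNReal _ (pow_nonneg (le_of_lt hx) _), smul_eq_mul]

lemma radial_gamma (m : ℕ) :
    ∫ r in Ioi (0:ℝ), r ^ m * Real.exp (-r^2) = Real.Gamma (((m:ℝ)+1)/2) / 2 := by
  have h : ∀ s ∈ Ioi (0:ℝ), s ^ m * Real.exp (-s^2) = s ^ ((m:ℕ):ℝ) * Real.exp (-s ^ (2:ℝ)) := by
    intro s hs
    rw [Real.rpow_natCast, show ((2:ℝ)) = ((2:ℕ):ℝ) by norm_num, Real.rpow_natCast]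
  rw [setIntegral_congr_fun measurableSet_Ioi h,
    integral_rpow_mul_exp_neg_rpow two_pos
      (by exact lt_of_lt_of_le (by norm_num) (Nat.cast_nonneg _))]
  ring

variable {n : ℕ}

lemma gauss_pi (m : ℕ) (i₀ : Fin n) :
    ∫ z : Fin n → ℝ, (z i₀)^m * Real.exp (-∑ i, (z i)^2)
      = (∫ t : ℝ, t^m * Real.exp (-t^2)) * Real.sqrt π ^ (n-1) := by
  classical
  have h : ∀ z : Fin n → ℝ, (z i₀)^m * Real.exp (-∑ i, (z i)^2)
      = ∏ i, (fun i (t:ℝ) => if i = i₀ then t^m * Real.exp (-t^2) else Real.exp (-t^2)) i (z i) := by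
    intro z
    rw [← Finset.mul_prod_erase Finset.univ _ (Finset.mem_univ i₀)]
    simp only [eq_self_iff_true, if_true]
    rw [show -∑ i, (z i)^2 = ∑ i, -((z i)^2) by rw [← Finset.sum_neg_distrib], Real.exp_sum,
      ← Finset.mul_prod_erase Finset.univ (fun i => Real.exp (-(z i)^2)) (Finset.mem_univ i₀),
      Finset.prod_congr rfl (fun i hi => if_neg (Finset.mem_erase.mp hi).1)]
    ring
  simp_rw [h]
  rw [volume_pi, MeasureTheory.integral_fintype_prod_eq_prod
    (fun i (t:ℝ) => if i = i₀ then t^m * Real.exp (-t^2) else Real.exp (-t^2))]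
  rw [← Finset.mul_prod_erase Finset.univ _ (Finset.mem_univ i₀)]
  simp only [eq_self_iff_true, if_true]
  have hcst : ∀ i ∈ Finset.univ.erase i₀,
      (∫ t : ℝ, if i = i₀ then t^m * Real.exp (-t^2) else Real.exp (-t^2))
        = ∫ t : ℝ, Real.exp (-t^2) := by
    intro i hi
    simp only [if_neg (Finset.mem_erase.mp hi).1]
  rw [Finset.prod_congr rfl hcst, Finset.prod_const,
    Finset.card_erase_of_mem (Finset.mem_univ i₀), Finset.card_univ, Fintype.card_fin]
  congr 1
  have hg := integral_gaussian (1:ℝ)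
  simp only [neg_mul, one_mul, div_one] at hg
  rw [hg]

lemma gauss_inner (hn : 0 < n) (e : EuclideanSpace ℝ (Fin n)) (he : ‖e‖ = 1) (m : ℕ) :
    ∫ y : EuclideanSpace ℝ (Fin n), ⟪e, y⟫ ^ m * Real.exp (-‖y‖^2)
      = (∫ t : ℝ, t^m * Real.exp (-t^2)) * Real.sqrt π ^ (n-1) := by
  set i₀ : Fin n := ⟨0, hn⟩ with hi₀
  set e₁ : EuclideanSpace ℝ (Fin n) := EuclideanSpace.single i₀ (1:ℝ) with he₁def
  have he₁ : ‖e₁‖ = 1 := by rw [he₁def, EuclideanSpace.norm_single]; simp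
  set T : EuclideanSpace ℝ (Fin n) ≃ₗᵢ[ℝ] EuclideanSpace ℝ (Fin n) :=
    Submodule.reflection (Submodule.span ℝ {e₁ - e})ᗮ with hTdef
  have hT : T e₁ = e := Submodule.reflection_sub (by rw [he₁, he])
  have h1 : ∫ y : EuclideanSpace ℝ (Fin n), ⟪e, y⟫^m * Real.exp (-‖y‖^2)
      = ∫ y : EuclideanSpace ℝ (Fin n), ⟪e, T y⟫^m * Real.exp (-‖T y‖^2) :=
    (T.measurePreserving.integral_comp T.toHomeomorph.measurableEmbedding
      (fun y => ⟪e,y⟫^m * Real.exp (-‖y‖^2))).symm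
  rw [h1]
  have h2 : ∀ y : EuclideanSpace ℝ (Fin n), ⟪e, T y⟫ = y i₀ := by
    intro y
    rw [← hT, T.inner_map_map, he₁def, EuclideanSpace.inner_single_left]
    simp
  have h6 : ∀ y : EuclideanSpace ℝ (Fin n), ‖T y‖^2 = ∑ i, (y i)^2 := by
    intro y
    rw [T.norm_map, EuclideanSpace.norm_eq, Real.sq_sqrt (Finset.sum_nonneg fun i _ => sq_nonneg _)]
    simp [sq_abs]
  simp_rw [h2, h6]
  have h4 := ((EuclideanSpace.volume_preserving_symm_measurableEquiv_toLp (Fin n)).symm).integral_comp'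
    (fun y : EuclideanSpace ℝ (Fin n) => (y i₀)^m * Real.exp (-∑ i, (y i)^2))
  rw [← h4]
  have h5 : ∀ z : Fin n → ℝ,
      ((MeasurableEquiv.toLp 2 (Fin n → ℝ)).symm.symm z).ofLp = z :=
    fun z => rfl
  exact gauss_pi m i₀

variable {n : ℕ}

lemma sphere_moment (hn : 0 < n) (e : EuclideanSpace ℝ (Fin n)) (he : ‖e‖ = 1) (m : ℕ) :
    (∫ ξ : sphere (0 : EuclideanSpace ℝ (Fin n)) 1, ⟪e, (ξ : EuclideanSpace ℝ (Fin n))⟫^m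
        ∂(volume : Measure (EuclideanSpace ℝ (Fin n))).toSphere)
      = 2 * (∫ t : ℝ, t^m * Real.exp (-t^2)) * Real.sqrt π ^ (n-1)
          / Real.Gamma (((m:ℝ)+n)/2) := by
  have hpolar := polar_eq hn (fun y : EuclideanSpace ℝ (Fin n) => ⟪e, y⟫^m * Real.exp (-‖y‖^2))
  rw [gauss_inner hn e he m] at hpolar
  have hfactor : ∀ p : sphere (0 : EuclideanSpace ℝ (Fin n)) 1 × Ioi (0:ℝ),
      ⟪e, (p.2.1 • p.1.1 : EuclideanSpace ℝ (Fin n))⟫^m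
          * Real.exp (-‖(p.2.1 • p.1.1 : EuclideanSpace ℝ (Fin n))‖^2)
        = (⟪e, (p.1.1 : EuclideanSpace ℝ (Fin n))⟫^m) * ((p.2.1)^m * Real.exp (-(p.2.1)^2)) := by
    intro p
    have hξ : ‖(p.1.1 : EuclideanSpace ℝ (Fin n))‖ = 1 := mem_sphere_zero_iff_norm.mp p.1.2
    have hr : (0:ℝ) < p.2.1 := p.2.2
    rw [real_inner_smul_right, norm_smul, hξ, mul_one, Real.norm_eq_abs, abs_of_pos hr, mul_pow]
    ring
  simp only [hfactor] at hpolar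
  rw [integral_prod_mul (μ := (volume : Measure (EuclideanSpace ℝ (Fin n))).toSphere)
    (ν := Measure.volumeIoiPow (n-1))
    (fun ξ : sphere (0 : EuclideanSpace ℝ (Fin n)) 1 => ⟪e, (ξ : EuclideanSpace ℝ (Fin n))⟫^m)
    (fun r : Ioi (0:ℝ) => (r.1)^m * Real.exp (-(r.1)^2))] at hpolar
  rw [integral_volumeIoiPow (n-1) (fun r => r^m * Real.exp (-r^2))] at hpolar
  have hrad : ∫ r in Ioi (0:ℝ), r^(n-1) * (r^m * Real.exp (-r^2))
      = Real.Gamma (((m:ℝ)+n)/2)/2 := by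
    have hcongr : ∀ r : ℝ, r^(n-1) * (r^m * Real.exp (-r^2)) = r^(n-1+m) * Real.exp (-r^2) :=
      fun r => by rw [pow_add]; ring
    simp only [hcongr]
    rw [radial_gamma (n-1+m)]
    congr 2
    rw [Nat.cast_add, Nat.cast_sub hn]
    push_cast
    ring
  rw [hrad] at hpolar
  have hn' : (0:ℝ) < (n:ℝ) := by exact_mod_cast hn
  have hΓ : 0 < Real.Gamma (((m:ℝ)+n)/2) :=
    Real.Gamma_pos_of_pos (div_pos (by positivity) two_pos)
  rw [eq_div_iff hΓ.ne']
  linear_combination -2 * hpolar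

lemma term_eq (n k : ℕ) (hn : 2 ≤ n) (ν r : ℝ) (hν : ν = ((n:ℝ)-2)/2) (hr : 0 < r) :
    (-1:ℝ)^k * (r^(2*k) * (2 * ((((2*k).factorial : ℝ)) * Real.sqrt π / (4^k * (k.factorial : ℝ)))
          * Real.sqrt π ^ (n-1) / Real.Gamma ((((2*k:ℕ):ℝ)+n)/2)) / ((2*k).factorial : ℝ))
      = (2*π)^((n:ℝ)/2) * ((-1:ℝ)^k / ((k.factorial : ℝ) * Real.Gamma ((k:ℝ) + ν + 1))
          * (r/2)^(2*(k:ℝ)+ν)) / r^ν := by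
  have hn2 : (2:ℝ) ≤ (n:ℝ) := by exact_mod_cast hn
  have hΓarg : ((((2*k:ℕ):ℝ))+n)/2 = (k:ℝ) + ν + 1 := by push_cast; rw [hν]; ring
  rw [hΓarg]
  have hΓpos : 0 < Real.Gamma ((k:ℝ)+ν+1) := by
    apply Real.Gamma_pos_of_pos
    have hk : (0:ℝ) ≤ (k:ℝ) := Nat.cast_nonneg k
    rw [hν]; nlinarith
  have hrx : (r/2) ^ (2*(k:ℝ)+ν) = (r^(2*k) / 4^k) * (r^ν / 2^ν) := by
    rw [show (2*(k:ℝ)+ν) = ((2*k:ℕ):ℝ) + ν by push_cast; ring,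
      Real.rpow_add (by positivity), Real.rpow_natCast,
      div_pow, Real.div_rpow hr.le (by norm_num : (0:ℝ) ≤ 2),
      show ((2:ℝ))^(2*k) = 4^k by rw [pow_mul]; norm_num]
  rw [hrx, show ((2*π)^((n:ℝ)/2) : ℝ) = 2^((n:ℝ)/2) * π^((n:ℝ)/2) from
    Real.mul_rpow (by norm_num) pi_pos.le]
  have hsqne : Real.sqrt π ≠ 0 := by positivity
  have hsqrtpi : Real.sqrt π ^ (n-1) = π^((n:ℝ)/2) / Real.sqrt π := by
    rw [eq_div_iff hsqne, ← pow_succ, show n-1+1 = n from by omega, Real.sqrt_eq_rpow,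
      ← Real.rpow_natCast (π ^ ((1:ℝ)/2)) n, ← Real.rpow_mul pi_pos.le]
    congr 1
    ring
  have h2ν : (2:ℝ)^((n:ℝ)/2) = 2 * 2^ν := by
    rw [show (n:ℝ)/2 = ν + 1 by rw [hν]; ring, Real.rpow_add two_pos, Real.rpow_one]
    ring
  rw [hsqrtpi, h2ν]
  have hrν : (0:ℝ) < r^ν := Real.rpow_pos_of_pos hr ν
  have h2νpos : (0:ℝ) < (2:ℝ)^ν := Real.rpow_pos_of_pos two_pos ν
  have hfk : ((k.factorial : ℝ)) ≠ 0 := by exact_mod_cast (Nat.factorial_pos k).ne'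
  have hf2k : (((2*k).factorial : ℝ)) ≠ 0 := by exact_mod_cast (Nat.factorial_pos (2*k)).ne'
  field_simp

theorem stmt3 (n : ℕ) (hn : 2 ≤ n)
    (ν : ℝ) (hν : ν = ((n : ℝ) - 2) / 2)
    (x : EuclideanSpace ℝ (Fin n)) (hx : x ≠ 0) :
    (∫ ξ : Metric.sphere (0 : EuclideanSpace ℝ (Fin n)) 1,
        Complex.exp (Complex.I * (⟪x, (ξ : EuclideanSpace ℝ (Fin n))⟫ : ℝ))
        ∂(sphereMeasure n))
      = (((2 * π) ^ ((n : ℝ) / 2) * besselJ ν ‖x‖ / ‖x‖ ^ ν : ℝ) : ℂ) := by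
  have h0 : 0 < n := by omega
  haveI : IsFiniteMeasure (sphereMeasure n) := by unfold sphereMeasure; infer_instance
  set r := ‖x‖ with hrdef
  have hrpos : 0 < r := norm_pos_iff.mpr hx
  set e : EuclideanSpace ℝ (Fin n) := r⁻¹ • x with hedef
  have he : ‖e‖ = 1 := by
    rw [hedef, norm_smul, norm_inv, Real.norm_eq_abs, abs_of_pos hrpos, ← hrdef,
      inv_mul_cancel₀ hrpos.ne']
  have hxe : ∀ ξ : EuclideanSpace ℝ (Fin n), (⟪x, ξ⟫ : ℝ) = r * ⟪e, ξ⟫ := by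
    intro ξ
    rw [hedef, real_inner_smul_left]
    field_simp
  set A : ℕ → ℝ := fun m => ∫ ξ : sphere (0 : EuclideanSpace ℝ (Fin n)) 1,
      ⟪e, (ξ : EuclideanSpace ℝ (Fin n))⟫^m ∂(sphereMeasure n) with hAdef
  set M : ℝ := ((sphereMeasure n) univ).toReal with hMdef
  have hM0 : 0 ≤ M := ENNReal.toReal_nonneg
  have hinner_le : ∀ (ξ : sphere (0 : EuclideanSpace ℝ (Fin n)) 1),
      |⟪e, (ξ : EuclideanSpace ℝ (Fin n))⟫| ≤ 1 := by
    intro ξ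
    calc |⟪e, (ξ : EuclideanSpace ℝ (Fin n))⟫| ≤ ‖e‖ * ‖(ξ : EuclideanSpace ℝ (Fin n))‖ :=
          abs_real_inner_le_norm _ _
    _ = 1 := by rw [he, mem_sphere_zero_iff_norm.mp ξ.2, mul_one]
  have hAbound : ∀ m, |A m| ≤ M := by
    intro m
    rw [hAdef]
    have := MeasureTheory.norm_integral_le_of_norm_le_const (μ := sphereMeasure n)
      (f := fun ξ : sphere (0 : EuclideanSpace ℝ (Fin n)) 1 =>
        ⟪e, (ξ : EuclideanSpace ℝ (Fin n))⟫^m) (C := 1)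
      (Filter.Eventually.of_forall fun ξ => by
        rw [Real.norm_eq_abs, abs_pow]
        exact pow_le_one₀ (abs_nonneg _) (hinner_le ξ))
    simpa [hMdef, measureReal_def] using this
  -- step 1: expand exponential and swap
  have hxr : ∀ ξ : sphere (0 : EuclideanSpace ℝ (Fin n)) 1,
      |(⟪x, (ξ : EuclideanSpace ℝ (Fin n))⟫ : ℝ)| ≤ r := by
    intro ξ
    rw [hxe]
    rw [abs_mul, abs_of_pos hrpos]
    have := hinner_le ξ
    nlinarith
  have hnorm_le : ∀ (m : ℕ) (ξ : sphere (0 : EuclideanSpace ℝ (Fin n)) 1),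
      ‖(Complex.I * ((⟪x, (ξ : EuclideanSpace ℝ (Fin n))⟫ : ℝ) : ℂ))^m / (m.factorial : ℂ)‖
        ≤ r^m / m.factorial := by
    intro m ξ
    rw [norm_div, norm_pow, norm_mul, Complex.norm_I, Complex.norm_real, one_mul,
      Complex.norm_natCast, Real.norm_eq_abs]
    gcongr
    exact hxr ξ
  have hmeas : ∀ m : ℕ, AEStronglyMeasurable
      (fun ξ : sphere (0 : EuclideanSpace ℝ (Fin n)) 1 =>
        (Complex.I * ((⟪x, (ξ : EuclideanSpace ℝ (Fin n))⟫ : ℝ) : ℂ))^m / (m.factorial : ℂ))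
      (sphereMeasure n) := by
    intro m
    apply Continuous.aestronglyMeasurable
    have hc : Continuous fun ξ : sphere (0 : EuclideanSpace ℝ (Fin n)) 1 =>
        (⟪x, (ξ : EuclideanSpace ℝ (Fin n))⟫ : ℝ) :=
      Continuous.inner continuous_const continuous_subtype_val
    exact ((continuous_const.mul (Complex.continuous_ofReal.comp hc)).pow m).div_const _
  have hint : (∫ ξ : Metric.sphere (0 : EuclideanSpace ℝ (Fin n)) 1,
        Complex.exp (Complex.I * (⟪x, (ξ : EuclideanSpace ℝ (Fin n))⟫ : ℝ)) ∂(sphereMeasure n))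
      = ∑' m : ℕ, ∫ ξ : sphere (0 : EuclideanSpace ℝ (Fin n)) 1,
          (Complex.I * ((⟪x, (ξ : EuclideanSpace ℝ (Fin n))⟫ : ℝ) : ℂ))^m / (m.factorial : ℂ)
          ∂(sphereMeasure n) := by
    have hexp : ∀ ξ : sphere (0 : EuclideanSpace ℝ (Fin n)) 1,
        Complex.exp (Complex.I * ((⟪x, (ξ : EuclideanSpace ℝ (Fin n))⟫ : ℝ) : ℂ))
          = ∑' m : ℕ, (Complex.I * ((⟪x, (ξ : EuclideanSpace ℝ (Fin n))⟫ : ℝ) : ℂ))^m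
              / (m.factorial : ℂ) := fun ξ => by
      rw [Complex.exp_eq_exp_ℂ, NormedSpace.exp_eq_tsum_div]
    simp only [hexp]
    refine integral_tsum hmeas ?_
    have hb : ∀ m : ℕ, (∫⁻ ξ, ‖(Complex.I * ((⟪x, (ξ : EuclideanSpace ℝ (Fin n))⟫ : ℝ) : ℂ))^m
          / (m.factorial : ℂ)‖₊ ∂(sphereMeasure n))
        ≤ ENNReal.ofReal (r^m / m.factorial) * (sphereMeasure n) univ := by
      intro m
      calc ∫⁻ ξ, ‖(Complex.I * ((⟪x, (ξ : EuclideanSpace ℝ (Fin n))⟫ : ℝ) : ℂ))^m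
            / (m.factorial : ℂ)‖₊ ∂(sphereMeasure n)
          ≤ ∫⁻ _, ENNReal.ofReal (r^m / m.factorial) ∂(sphereMeasure n) := by
            refine lintegral_mono fun ξ => ?_
            rw [← enorm_eq_nnnorm, ← ofReal_norm]
            exact ENNReal.ofReal_le_ofReal (hnorm_le m ξ)
      _ = ENNReal.ofReal (r^m / m.factorial) * (sphereMeasure n) univ := lintegral_const _
    refine ne_top_of_le_ne_top ?_ (ENNReal.tsum_le_tsum hb)
    rw [ENNReal.tsum_mul_right,
      ← ENNReal.ofReal_tsum_of_nonneg (fun m => by positivity) (Real.summable_pow_div_factorial r)]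
    exact ENNReal.mul_ne_top ENNReal.ofReal_ne_top (measure_ne_top _ _)
  -- step 2: per-term value
  have hterm : ∀ m : ℕ, (∫ ξ : sphere (0 : EuclideanSpace ℝ (Fin n)) 1,
        (Complex.I * ((⟪x, (ξ : EuclideanSpace ℝ (Fin n))⟫ : ℝ) : ℂ))^m / (m.factorial : ℂ)
        ∂(sphereMeasure n))
      = Complex.I^m * (((r^m * A m / m.factorial : ℝ)) : ℂ) := by
    intro m
    have h1 : ∀ ξ : sphere (0 : EuclideanSpace ℝ (Fin n)) 1,
        (Complex.I * ((⟪x, (ξ : EuclideanSpace ℝ (Fin n))⟫ : ℝ) : ℂ))^m / (m.factorial : ℂ)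
          = (Complex.I^m / (m.factorial : ℂ))
              * (((⟪e, (ξ : EuclideanSpace ℝ (Fin n))⟫^m * r^m : ℝ)) : ℂ) := by
      intro ξ
      rw [hxe]
      push_cast
      ring
    simp only [h1]
    rw [MeasureTheory.integral_const_mul,
      show (∫ ξ : sphere (0 : EuclideanSpace ℝ (Fin n)) 1,
          ((⟪e, (ξ : EuclideanSpace ℝ (Fin n))⟫^m * r^m : ℝ) : ℂ) ∂(sphereMeasure n))
        = ((∫ ξ : sphere (0 : EuclideanSpace ℝ (Fin n)) 1,
            (⟪e, (ξ : EuclideanSpace ℝ (Fin n))⟫^m * r^m : ℝ) ∂(sphereMeasure n) : ℝ) : ℂ) from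
        integral_ofReal]
    rw [show (∫ ξ : sphere (0 : EuclideanSpace ℝ (Fin n)) 1,
        ⟪e, (ξ : EuclideanSpace ℝ (Fin n))⟫^m * r^m ∂(sphereMeasure n)) = A m * r^m from
      integral_mul_const _ _]
    push_cast
    ring
  rw [hint]
  rw [tsum_congr hterm]
  -- step 3: even/odd split
  set c : ℕ → ℂ := fun m => Complex.I^m * (((r^m * A m / m.factorial : ℝ)) : ℂ) with hcdef
  set breal : ℕ → ℝ := fun k => (-1:ℝ)^k * (r^(2*k) * A (2*k) / (2*k).factorial) with hbdef
  have hsum_b : Summable breal := by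
    refine Summable.of_norm_bounded (g := fun k : ℕ => M * ((r^2)^k / k.factorial))
      ((Real.summable_pow_div_factorial (r^2)).mul_left M) fun k => ?_
    rw [hbdef]
    simp only [norm_mul, norm_pow, norm_neg, norm_one, one_pow, one_mul, norm_div,
      Real.norm_eq_abs]
    rw [abs_of_pos hrpos,
      abs_of_pos (show (0:ℝ) < ((2*k).factorial : ℝ) by exact_mod_cast Nat.factorial_pos (2*k))]
    have h1 : r ^ (2*k) * |A (2*k)| ≤ r^(2*k) * M :=
      mul_le_mul_of_nonneg_left (hAbound (2*k)) (by positivity)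
    have h2 : (k.factorial : ℝ) ≤ ((2*k).factorial : ℝ) := by
      exact_mod_cast Nat.factorial_le (by omega)
    calc r ^ (2*k) * |A (2*k)| / ((2*k).factorial : ℝ)
        ≤ r^(2*k) * M / ((2*k).factorial : ℝ) := by gcongr
    _ ≤ r^(2*k) * M / (k.factorial : ℝ) := by
        gcongr
    _ = M * ((r^2)^k / k.factorial) := by rw [← pow_mul]; ring
  have hodd : ∀ k : ℕ, c (2*k+1) = 0 := by
    intro k
    have hA0 : A (2*k+1) = 0 := by
      rw [hAdef]
      show (∫ ξ : sphere (0 : EuclideanSpace ℝ (Fin n)) 1,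
        ⟪e, (ξ : EuclideanSpace ℝ (Fin n))⟫^(2*k+1) ∂(sphereMeasure n)) = 0
      rw [show sphereMeasure n = (volume : Measure (EuclideanSpace ℝ (Fin n))).toSphere from rfl,
        sphere_moment h0 e he (2*k+1), gauss_odd k]
      simp
    rw [hcdef]
    simp [hA0]
  have heven : ∀ k : ℕ, c (2*k) = ((breal k : ℝ) : ℂ) := by
    intro k
    rw [hcdef, hbdef]
    simp only []
    rw [pow_mul, Complex.I_sq]
    push_cast
    ring
  have hhs : HasSum c (((∑' k, breal k : ℝ)) : ℂ) := by
    have h1 : HasSum (fun k : ℕ => c (2*k)) (((∑' k, breal k : ℝ)) : ℂ) := by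
      simp only [heven]
      exact (Complex.hasSum_ofReal).mpr hsum_b.hasSum
    have h2 : HasSum (fun k : ℕ => c (2*k+1)) 0 := by
      simp only [hodd]
      exact hasSum_zero
    simpa using h1.even_add_odd h2
  rw [hhs.tsum_eq]
  -- step 4: real identity
  congr 1
  rw [besselJ, ← tsum_mul_left, ← tsum_div_const]
  refine tsum_congr fun k => ?_
  rw [hbdef]
  simp only []
  rw [show A (2*k) = 2 * (∫ t : ℝ, t^(2*k) * Real.exp (-t^2)) * Real.sqrt π ^ (n-1)
      / Real.Gamma ((((2*k:ℕ):ℝ)+n)/2) from sphere_moment h0 e he (2*k),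
    gauss_even k, gamma_half k]
  exact term_eq n k hn ν r hν hrpos
end
end

section
/- Let n ≥ 2 and set ν = (n−2)/2. Let P be a homogeneous polynomial of degree ℓ in n variables with ΔP = 0. Then the function f : ℝ^n → ℝ defined for x ≠ 0 by f(x) = P(x) · J_{ℓ+ν}(|x|) / |x|^{ℓ+ν} extends to a smooth function on all of ℝ^n, and this extension satisfies Δf + f = 0 on ℝ^n. -/
/-!
Writing `J_μ(r) / r^μ = g(r²)` with the entire series
`g(t) = Σₖ (-1)ᵏ tᵏ / (k! Γ(k + μ + 1) 4ᵏ 2^μ)`, the function is `f(x) = P(x) g(‖x‖²)`, which is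
smooth. For `P` harmonic and homogeneous of degree `ℓ`, Euler's identity `x · ∇P = ℓ P` gives
`Δ(P g(‖x‖²)) = P ((4ℓ + 2n) g'(‖x‖²) + 4 ‖x‖² g''(‖x‖²))`. With `μ = ℓ + ν` we have
`4ℓ + 2n = 4μ + 4`, so `Δf + f = 0` reduces to the Bessel-type equation
`g + (4μ + 4) g' + 4 t g'' = 0`, which is the recursion `(k + 1)(4k + 4μ + 4) cₖ₊₁ + cₖ = 0`
satisfied by the coefficients of `g`.
-/

open MeasureTheory Real

noncomputable section

/-- The Laplacian of a polynomial in `n` variables. -/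
def polyLaplacian {n : ℕ} (P : MvPolynomial (Fin n) ℝ) : MvPolynomial (Fin n) ℝ :=
  ∑ i : Fin n, MvPolynomial.pderiv i (MvPolynomial.pderiv i P)

/-- The Euclidean Laplacian `Δf = Σᵢ ∂²f/∂xᵢ²` of a function on `ℝ^n`. -/
def laplacian {n : ℕ} (f : EuclideanSpace ℝ (Fin n) → ℝ) (x : EuclideanSpace ℝ (Fin n)) : ℝ :=
  ∑ i : Fin n,
    fderiv ℝ (fun y => fderiv ℝ f y (EuclideanSpace.single i 1)) x (EuclideanSpace.single i 1)

open MvPolynomial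

def powSeries (c : ℕ → ℝ) (t : ℝ) : ℝ := ∑' k, c k * t ^ k

def derivCoeff (c : ℕ → ℝ) (k : ℕ) : ℝ := (k + 1) * c (k + 1)

def IsEntireCoeff (c : ℕ → ℝ) : Prop := ∀ R : ℝ, 0 < R → Summable fun k => |c k| * R ^ k

section PowerSeries

variable {c : ℕ → ℝ}

lemma IsEntireCoeff.abs_le_div_factorial (h : ∀ k : ℕ, (k + 1 : ℝ) * |c (k + 1)| ≤ |c k|) (k : ℕ) :
    |c k| ≤ |c 0| / k.factorial := by
  induction k with
  | zero => simp
  | succ k ih =>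
    rw [Nat.factorial_succ, Nat.cast_mul, mul_comm, ← div_div, le_div_iff₀ (by positivity),
      mul_comm]
    push_cast
    exact (h k).trans ih

lemma IsEntireCoeff.of_succ_mul_abs_le (h : ∀ k : ℕ, (k + 1 : ℝ) * |c (k + 1)| ≤ |c k|) :
    IsEntireCoeff c := by
  intro R _
  refine .of_nonneg_of_le (fun k => by positivity) (fun k => ?_)
    ((Real.summable_pow_div_factorial R).mul_left |c 0|)
  calc |c k| * R ^ k ≤ |c 0| / k.factorial * R ^ k := by gcongr; exact abs_le_div_factorial h k
    _ = |c 0| * (R ^ k / k.factorial) := by ring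

lemma IsEntireCoeff.derivCoeff (hc : IsEntireCoeff c) : IsEntireCoeff (derivCoeff c) := by
  intro R hR
  -- `k + 1 ≤ 2 ^ (k + 1)` trades the factor `k + 1` for a doubled radius
  have hsum := ((summable_nat_add_iff 1).2 (hc (2 * R) (by positivity))).mul_left R⁻¹
  refine .of_nonneg_of_le (fun k => by positivity) (fun k => ?_) hsum
  have hk : (k + 1 : ℝ) ≤ 2 ^ (k + 1) := by exact_mod_cast (Nat.lt_two_pow_self (n := k + 1)).le
  calc |_root_.derivCoeff c k| * R ^ k = (k + 1) * |c (k + 1)| * R ^ k := by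
        rw [_root_.derivCoeff, abs_mul, abs_of_nonneg (by positivity : (0 : ℝ) ≤ k + 1)]
    _ ≤ 2 ^ (k + 1) * |c (k + 1)| * R ^ k := by gcongr
    _ = R⁻¹ * (|c (k + 1)| * (2 * R) ^ (k + 1)) := by field_simp; ring

lemma IsEntireCoeff.summable_abs (hc : IsEntireCoeff c) (t : ℝ) :
    Summable fun k => |c k * t ^ k| := by
  refine .of_nonneg_of_le (fun k => abs_nonneg _) (fun k => ?_) (hc (|t| + 1) (by positivity))
  rw [abs_mul, abs_pow]
  gcongr
  linarith

lemma IsEntireCoeff.summable (hc : IsEntireCoeff c) (t : ℝ) : Summable fun k => c k * t ^ k :=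
  (hc.summable_abs t).of_abs

lemma hasDerivAt_powSeries (hc : IsEntireCoeff c) (t : ℝ) :
    HasDerivAt (powSeries c) (powSeries (derivCoeff c) t) t := by
  have hshift : powSeries c = fun y => c 0 + ∑' k, c (k + 1) * y ^ (k + 1) := by
    funext y
    exact (hc.summable y).tsum_eq_zero_add.trans (by simp)
  rw [hshift]
  refine (hasDerivAt_const t (c 0)).add ?_ |>.congr_deriv (zero_add _)
  set R := |t| + 1
  have hball : ∀ y ∈ Metric.ball (0 : ℝ) R, |y| ≤ R := fun y hy => by
    rw [Metric.mem_ball, Real.dist_eq, sub_zero] at hy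
    exact hy.le
  refine hasDerivAt_tsum_of_isPreconnected (hc.derivCoeff R (by positivity)) Metric.isOpen_ball
    (convex_ball 0 R).isPreconnected (g' := fun k y => derivCoeff c k * y ^ k) (y₀ := 0)
    (fun k y _ => ?_) (fun k y hy => ?_) (by simp [R]; positivity) ?_ (by simp [R])
  · refine ((hasDerivAt_pow (k + 1) y).const_mul (c (k + 1))).congr_deriv ?_
    simp only [derivCoeff, Nat.add_sub_cancel]
    push_cast
    ring
  · rw [Real.norm_eq_abs, abs_mul, abs_pow]
    gcongr
    exact hball y hy
  · simp

lemma contDiff_powSeries (hc : IsEntireCoeff c) : ContDiff ℝ (⊤ : ℕ∞) (powSeries c) := by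
  rw [contDiff_infty]
  intro m
  induction m generalizing c with
  | zero => exact contDiff_zero.2 <| continuous_iff_continuousAt.2 fun t =>
      (hasDerivAt_powSeries hc t).continuousAt
  | succ m ih =>
    have hderiv : deriv (powSeries c) = powSeries (derivCoeff c) :=
      funext fun t => (hasDerivAt_powSeries hc t).deriv
    rw [Nat.cast_succ]
    refine contDiff_succ_iff_deriv.2 ⟨fun t => (hasDerivAt_powSeries hc t).differentiableAt,
      by simp, ?_⟩
    rw [hderiv]
    exact ih hc.derivCoeff

lemma powSeries_ode_of_recursion (hc : IsEntireCoeff c) {A : ℝ}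
    (hrec : ∀ k : ℕ, (k + 1) * (4 * k + A) * c (k + 1) + c k = 0) (t : ℝ) :
    powSeries c t + A * powSeries (derivCoeff c) t
      + 4 * (t * powSeries (derivCoeff (derivCoeff c)) t) = 0 := by
  have hw : Summable fun k : ℕ => (k : ℝ) * derivCoeff c k * t ^ k := by
    refine (summable_nat_add_iff 1).1
      ((hc.derivCoeff.derivCoeff.summable t).mul_left t |>.congr ?_)
    intro k
    simp only [derivCoeff]
    push_cast
    ring
  have hshift : t * powSeries (derivCoeff (derivCoeff c)) t
      = ∑' k : ℕ, k * derivCoeff c k * t ^ k := by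
    rw [hw.tsum_eq_zero_add, powSeries, ← tsum_mul_left]
    simp only [Nat.cast_zero, zero_mul, zero_add, derivCoeff]
    refine tsum_congr fun k => ?_
    push_cast
    ring
  have hterm : ∀ k : ℕ,
      c k * t ^ k + A * (derivCoeff c k * t ^ k) + 4 * (k * derivCoeff c k * t ^ k) = 0 := by
    intro k
    simp only [derivCoeff]
    linear_combination t ^ k * hrec k
  have hsum := ((hc.summable t).hasSum.add ((hc.derivCoeff.summable t).hasSum.mul_left A)).add
    (hw.hasSum.mul_left 4)
  simp only [hterm] at hsum
  rw [hshift]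
  exact hasSum_zero.unique hsum |>.symm

end PowerSeries

section RadialAnsatz

variable {n : ℕ}

def polyEval (P : MvPolynomial (Fin n) ℝ) (x : EuclideanSpace ℝ (Fin n)) : ℝ :=
  eval (fun i => x i) P

lemma contDiff_polyEval (P : MvPolynomial (Fin n) ℝ) : ContDiff ℝ (⊤ : ℕ∞) (polyEval P) := by
  have h := AnalyticOnNhd.eval_continuousLinearMap' (fun i => EuclideanSpace.proj (𝕜 := ℝ) i) P
  exact h.contDiff

lemma hasFDerivAt_polyEval (P : MvPolynomial (Fin n) ℝ) (x : EuclideanSpace ℝ (Fin n)) :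
    HasFDerivAt (polyEval P)
      (∑ i, polyEval (pderiv i P) x • EuclideanSpace.proj (𝕜 := ℝ) i) x := by
  induction P using MvPolynomial.induction_on with
  | C a =>
    have h : polyEval (C a : MvPolynomial (Fin n) ℝ) = fun _ => a := funext fun y => eval_C a
    simpa [h, polyEval] using hasFDerivAt_const (𝕜 := ℝ) a x
  | add p q hp hq =>
    have h : polyEval (p + q) = polyEval p + polyEval q := funext fun y => eval_add
    rw [h]
    refine (hp.add hq).congr_fderiv ?_
    simp [polyEval, add_smul, Finset.sum_add_distrib]
  | mul_X p i hp =>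
    have h : polyEval (p * X i) = fun y => polyEval p y * EuclideanSpace.proj (𝕜 := ℝ) i y :=
      funext fun y => by simp [polyEval]
    rw [h]
    refine (hp.mul ((EuclideanSpace.proj i).hasFDerivAt (x := x))).congr_fderiv ?_
    ext v
    simp [polyEval, pderiv_X, Pi.single_apply, add_mul, Finset.sum_add_distrib, apply_ite,
      Finset.mul_sum, mul_assoc]

-- Partial derivatives stay in this family (`hasFDerivAt_polyRadial`), so the Laplacian can be
-- computed by differentiating twice within it.
def polyRadial (A : MvPolynomial (Fin n) ℝ) (a : ℕ → ℝ) (x : EuclideanSpace ℝ (Fin n)) : ℝ :=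
  polyEval A x * powSeries a (‖x‖ ^ 2)

lemma contDiff_polyRadial (A : MvPolynomial (Fin n) ℝ) {a : ℕ → ℝ} (ha : IsEntireCoeff a) :
    ContDiff ℝ (⊤ : ℕ∞) (polyRadial A a) :=
  (contDiff_polyEval A).mul ((contDiff_powSeries ha).comp (contDiff_norm_sq ℝ))

lemma hasFDerivAt_polyRadial (A : MvPolynomial (Fin n) ℝ) {a : ℕ → ℝ} (ha : IsEntireCoeff a)
    (x : EuclideanSpace ℝ (Fin n)) :
    HasFDerivAt (polyRadial A a)
      (∑ j, (polyRadial (pderiv j A) a x + 2 * polyRadial (X j * A) (derivCoeff a) x) •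
        EuclideanSpace.proj (𝕜 := ℝ) j) x := by
  have h := (hasFDerivAt_polyEval A x).mul
    ((hasDerivAt_powSeries ha _).comp_hasFDerivAt x (hasStrictFDerivAt_norm_sq x).hasFDerivAt)
  refine h.congr_fderiv ?_
  ext v
  simp only [polyRadial, polyEval, add_apply, smul_apply, FunLike.coe_sum, Finset.sum_apply,
    map_mul, eval_X, innerSL_apply_apply, PiLp.inner_apply,
    Function.comp_apply, PiLp.proj_apply, smul_eq_mul, nsmul_eq_mul, add_mul,
    Finset.sum_add_distrib, Finset.mul_sum, RCLike.inner_apply, conj_trivial]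
  rw [add_comm]
  congr 1 <;> exact Finset.sum_congr rfl fun i _ => by ring

lemma fderiv_polyRadial_single (A : MvPolynomial (Fin n) ℝ) {a : ℕ → ℝ} (ha : IsEntireCoeff a)
    (x : EuclideanSpace ℝ (Fin n)) (j : Fin n) :
    fderiv ℝ (polyRadial A a) x (EuclideanSpace.single j 1)
      = polyRadial (pderiv j A) a x + 2 * polyRadial (X j * A) (derivCoeff a) x := by
  rw [(hasFDerivAt_polyRadial A ha x).fderiv]
  simp

lemma laplacian_polyRadial (A : MvPolynomial (Fin n) ℝ) {a : ℕ → ℝ} (ha : IsEntireCoeff a)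
    (x : EuclideanSpace ℝ (Fin n)) :
    laplacian (polyRadial A a) x
      = ∑ j, (polyRadial (pderiv j (pderiv j A)) a x
          + 2 * polyRadial (X j * pderiv j A) (derivCoeff a) x
          + 2 * (polyRadial (pderiv j (X j * A)) (derivCoeff a) x
            + 2 * polyRadial (X j * (X j * A)) (derivCoeff (derivCoeff a)) x)) := by
  refine Finset.sum_congr rfl fun j _ => ?_
  have hpartial : (fun y => fderiv ℝ (polyRadial A a) y (EuclideanSpace.single j 1))
      = fun y => polyRadial (pderiv j A) a y + 2 * polyRadial (X j * A) (derivCoeff a) y :=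
    funext fun y => fderiv_polyRadial_single A ha y j
  rw [hpartial, ((hasFDerivAt_polyRadial _ ha x).fun_add
    ((hasFDerivAt_polyRadial _ ha.derivCoeff x).const_mul 2)).fderiv]
  simp [mul_add]

lemma laplacian_polyRadial_of_isHomogeneous_of_harmonic {ℓ : ℕ} {A : MvPolynomial (Fin n) ℝ}
    (hA : A.IsHomogeneous ℓ) (hharm : polyLaplacian A = 0) {a : ℕ → ℝ} (ha : IsEntireCoeff a)
    (x : EuclideanSpace ℝ (Fin n)) :
    laplacian (polyRadial A a) x
      = polyEval A x * ((4 * ℓ + 2 * n) * powSeries (derivCoeff a) (‖x‖ ^ 2)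
          + 4 * (‖x‖ ^ 2 * powSeries (derivCoeff (derivCoeff a)) (‖x‖ ^ 2))) := by
  have hzero : ∑ j, polyEval (pderiv j (pderiv j A)) x = 0 := by
    simpa [polyLaplacian, polyEval] using congrArg (eval fun i => x i) hharm
  have heuler : ∑ j, x j * polyEval (pderiv j A) x = ℓ * polyEval A x := by
    simpa [polyEval] using congrArg (eval fun i => x i) hA.sum_X_mul_pderiv
  have hnorm : ∑ j, x j ^ 2 = ‖x‖ ^ 2 := by
    simp [EuclideanSpace.norm_sq_eq]
  set g := powSeries a (‖x‖ ^ 2)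
  set g' := powSeries (derivCoeff a) (‖x‖ ^ 2)
  set g'' := powSeries (derivCoeff (derivCoeff a)) (‖x‖ ^ 2)
  have hterm : ∀ j : Fin n,
      polyRadial (pderiv j (pderiv j A)) a x + 2 * polyRadial (X j * pderiv j A) (derivCoeff a) x
        + 2 * (polyRadial (pderiv j (X j * A)) (derivCoeff a) x
          + 2 * polyRadial (X j * (X j * A)) (derivCoeff (derivCoeff a)) x)
      = polyEval (pderiv j (pderiv j A)) x * g + x j * polyEval (pderiv j A) x * (4 * g')
        + x j ^ 2 * (4 * polyEval A x * g'') + 2 * polyEval A x * g' := by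
    intro j
    simp only [polyRadial, polyEval, pderiv_mul, pderiv_X_self, map_add, map_mul, eval_X, one_mul]
    ring
  rw [laplacian_polyRadial A ha x, Finset.sum_congr rfl fun j _ => hterm j]
  simp only [Finset.sum_add_distrib, ← Finset.sum_mul, hzero, heuler, hnorm, Finset.sum_const,
    Finset.card_univ, Fintype.card_fin, nsmul_eq_mul]
  ring

end RadialAnsatz

section Bessel

def besselCoeff (μ : ℝ) (k : ℕ) : ℝ :=
  (-1) ^ k / (k.factorial * Gamma (k + μ + 1)) / (4 ^ k * 2 ^ μ)

lemma besselCoeff_succ {μ : ℝ} (hμ : -1 < μ) (k : ℕ) :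
    (k + 1) * (4 * k + (4 * μ + 4)) * besselCoeff μ (k + 1) + besselCoeff μ k = 0 := by
  have hpos : 0 < (k : ℝ) + μ + 1 := by linarith [k.cast_nonneg (α := ℝ)]
  have hΓ : Gamma ((k + 1 : ℕ) + μ + 1) = (k + μ + 1) * Gamma (k + μ + 1) := by
    rw [Nat.cast_succ, show (k : ℝ) + 1 + μ + 1 = (k + μ + 1) + 1 by ring,
      Gamma_add_one hpos.ne']
  have := (Gamma_pos_of_pos hpos).ne'
  have := (rpow_pos_of_pos two_pos μ).ne'
  rw [besselCoeff, besselCoeff, hΓ, Nat.factorial_succ, Nat.cast_mul, pow_succ, pow_succ]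
  field_simp
  push_cast
  ring

lemma isEntireCoeff_besselCoeff {μ : ℝ} (hμ : 0 ≤ μ) : IsEntireCoeff (besselCoeff μ) := by
  refine IsEntireCoeff.of_succ_mul_abs_le fun k => ?_
  have hrec := besselCoeff_succ (by linarith) k
  have hfactor : 1 ≤ 4 * (k : ℝ) + (4 * μ + 4) := by linarith [k.cast_nonneg (α := ℝ)]
  calc (k + 1 : ℝ) * |besselCoeff μ (k + 1)|
      ≤ (k + 1) * |besselCoeff μ (k + 1)| * (4 * k + (4 * μ + 4)) :=
        le_mul_of_one_le_right (by positivity) hfactor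
    _ = |besselCoeff μ k| := by
        rw [eq_neg_of_add_eq_zero_right hrec, abs_neg, abs_mul, abs_mul,
          abs_of_pos (by positivity : (0 : ℝ) < k + 1),
          abs_of_pos (by linarith : (0 : ℝ) < 4 * k + (4 * μ + 4))]
        ring

lemma besselJ_div_rpow {μ r : ℝ} (hr : 0 < r) :
    besselJ μ r / r ^ μ = powSeries (besselCoeff μ) (r ^ 2) := by
  have hterm : ∀ k : ℕ, (-1) ^ k / (k.factorial * Gamma (k + μ + 1)) * (r / 2) ^ (2 * (k : ℝ) + μ)
      / r ^ μ = besselCoeff μ k * (r ^ 2) ^ k := by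
    intro k
    rw [rpow_add (by positivity), show 2 * (k : ℝ) = (2 * k : ℕ) by push_cast; ring,
      rpow_natCast, div_rpow hr.le zero_le_two, besselCoeff, pow_mul, div_pow, div_pow]
    have := (rpow_pos_of_pos hr μ).ne'
    have := (rpow_pos_of_pos two_pos μ).ne'
    norm_num
    field_simp
  rw [besselJ, ← tsum_div_const]
  exact tsum_congr hterm

end Bessel

theorem stmt4 (n : ℕ) (hn : 2 ≤ n) (ℓ : ℕ)
    (ν : ℝ) (hν : ν = ((n : ℝ) - 2) / 2)
    (P : MvPolynomial (Fin n) ℝ) (hP : P.IsHomogeneous ℓ) (hPharm : polyLaplacian P = 0) :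
    ∃ f : EuclideanSpace ℝ (Fin n) → ℝ, ContDiff ℝ (⊤ : ℕ∞) f ∧
      (∀ x : EuclideanSpace ℝ (Fin n), x ≠ 0 →
        f x = MvPolynomial.eval (fun i => x i) P * besselJ ((ℓ : ℝ) + ν) ‖x‖ / ‖x‖ ^ ((ℓ : ℝ) + ν)) ∧
      ∀ x : EuclideanSpace ℝ (Fin n), laplacian f x + f x = 0 := by
  have hμ : 0 ≤ (ℓ : ℝ) + ν := by
    have : (2 : ℝ) ≤ n := by exact_mod_cast hn
    rw [hν]
    linarith [ℓ.cast_nonneg (α := ℝ)]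
  have hcoeff := isEntireCoeff_besselCoeff hμ
  refine ⟨polyRadial P (besselCoeff (ℓ + ν)), contDiff_polyRadial P hcoeff, fun x hx => ?_,
    fun x => ?_⟩
  · rw [polyRadial, ← besselJ_div_rpow (norm_pos_iff.2 hx), mul_div_assoc]
    rfl
  · have hode := powSeries_ode_of_recursion hcoeff
      (besselCoeff_succ (by linarith)) (‖x‖ ^ 2)
    have hdim : 4 * (ℓ : ℝ) + 2 * n = 4 * (ℓ + ν) + 4 := by
      rw [hν]
      ring
    rw [laplacian_polyRadial_of_isHomogeneous_of_harmonic hP hPharm hcoeff, polyRadial, hdim]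
    linear_combination polyEval P x * hode
end
end
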